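/- For any triple (α,β,γ) ∈ ℕ³, the ideal of ℝ[z₁,z₂] generated by the three polynomials B#_{α+1,β,γ}, B#_{α,β+1,γ}, and B#_{α,β,γ+1} equals the principal ideal generated by B#_{α,β,γ}. -/

import Mathlib

open MvPolynomial

/-- The normalized three-directional box spline symbol
`B#_{α,β,γ}(z₁,z₂) = ((1+z₁)/2)^α ((1+z₂)/2)^β ((1+z₁z₂)/2)^γ`. -/
noncomputable def Bs (α β γ : ℕ) : MvPolynomial (Fin 2) ℝ :=
  (C (1 / 2 : ℝ) * (1 + X 0)) ^ α * (C (1 / 2 : ℝ) * (1 + X 1)) ^ β *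
    (C (1 / 2 : ℝ) * (1 + X 0 * X 1)) ^ γ

/-! Raising one exponent multiplies `B#` by the corresponding factor
`a = (1+z₁)/2`, `b = (1+z₂)/2` or `c = (1+z₁z₂)/2`; since `a + b + c - 2ab = 1`,
these three factors generate the unit ideal, so the three products span exactly `(B#)`. -/

theorem Ideal.span_mul_triple_eq_span_singleton {R : Type*} [CommSemiring R] {a b c : R}
    (h : Ideal.span ({a, b, c} : Set R) = ⊤) (p : R) :
    Ideal.span ({p * a, p * b, p * c} : Set R) = Ideal.span {p} := by
  rw [← Ideal.mul_top (Ideal.span {p}), ← h, Ideal.span_mul_span', Set.singleton_mul,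
    Set.image_insert_eq, Set.image_pair]

namespace Bs

theorem succ_left (α β γ : ℕ) : Bs (α + 1) β γ = Bs α β γ * (C (1 / 2 : ℝ) * (1 + X 0)) := by
  simp only [Bs]; ring

theorem succ_mid (α β γ : ℕ) : Bs α (β + 1) γ = Bs α β γ * (C (1 / 2 : ℝ) * (1 + X 1)) := by
  simp only [Bs]; ring

theorem succ_right (α β γ : ℕ) :
    Bs α β (γ + 1) = Bs α β γ * (C (1 / 2 : ℝ) * (1 + X 0 * X 1)) := by
  simp only [Bs]; ring

theorem span_factors_eq_top :
    Ideal.span ({C (1 / 2 : ℝ) * (1 + X 0), C (1 / 2 : ℝ) * (1 + X 1),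
      C (1 / 2 : ℝ) * (1 + X 0 * X 1)} : Set (MvPolynomial (Fin 2) ℝ)) = ⊤ := by
  set a : MvPolynomial (Fin 2) ℝ := C (1 / 2 : ℝ) * (1 + X 0)
  set b : MvPolynomial (Fin 2) ℝ := C (1 / 2 : ℝ) * (1 + X 1)
  set c : MvPolynomial (Fin 2) ℝ := C (1 / 2 : ℝ) * (1 + X 0 * X 1)
  have hC : (C (1 / 2 : ℝ) : MvPolynomial (Fin 2) ℝ) * 2 = 1 := by
    rw [← map_ofNat C 2, ← C_mul]; norm_num
  have hunit : a + b + c - 2 * a * b = 1 := by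
    simp only [a, b, c]; linear_combination (1 - C (1 / 2 : ℝ) * (1 + X 0) * (1 + X 1)) * hC
  have mem {x} (hx : x ∈ ({a, b, c} : Set (MvPolynomial (Fin 2) ℝ))) :
      x ∈ Ideal.span {a, b, c} := Ideal.subset_span hx
  rw [Ideal.eq_top_iff_one, ← hunit]
  exact sub_mem (add_mem (add_mem (mem (by simp)) (mem (by simp))) (mem (by simp)))
    (Ideal.mul_mem_left _ _ (mem (by simp)))

end Bs

/-- The ideal generated by `B#_{α+1,β,γ}`, `B#_{α,β+1,γ}`, `B#_{α,β,γ+1}` equals the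
principal ideal generated by `B#_{α,β,γ}`. -/
theorem stmt_10 (α β γ : ℕ) :
    Ideal.span ({Bs (α + 1) β γ, Bs α (β + 1) γ, Bs α β (γ + 1)} :
        Set (MvPolynomial (Fin 2) ℝ)) =
      Ideal.span ({Bs α β γ} : Set (MvPolynomial (Fin 2) ℝ)) := by
  rw [Bs.succ_left, Bs.succ_mid, Bs.succ_right]
  exact Ideal.span_mul_triple_eq_span_singleton Bs.span_factors_eq_top _
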